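/- arXiv:1009.3863 — 2 statements merged into one kernel-verified Lean document; each statement's English description precedes it below -/
import Mathlib

section
/- Let $H_1, H_2$ be independent exponential random variables with distinct positive means $P_1 \neq P_2$, let $H_3$ be exponential with mean $P_3 > 0$ independent of both, and let $\gamma > 0$. Then $\mathbb{P}(H_1 + H_2 > \gamma H_3) = \frac{P_1}{P_1 - P_2} \cdot \frac{P_1}{P_1 + \gamma P_3} + \frac{P_2}{P_2 - P_1} \cdot \frac{P_2}{P_2 + \gamma P_3}$. -/
/-!
Conditioning on `S = H₀ + H₁`, the exponential tail of `H₂` gives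
`ℙ(S ≤ γ H₂) = 𝔼[exp (-S / (γ P₂))]`, the moment generating function of `S` at `-1 / (γ P₂)`.
By independence it factors into the two exponential ones, `γ P₂ / (P_i + γ P₂)`, and the formula
is the partial fraction decomposition of the complementary probability.
-/

open MeasureTheory ProbabilityTheory Real Set

namespace ProbabilityTheory

variable {r : ℝ}

lemma measurable_exponentialPDF (r : ℝ) : Measurable (exponentialPDF r) :=
  (measurable_exponentialPDFReal r).ennreal_ofReal

lemma exponentialPDFReal_eq (r x : ℝ) :
    exponentialPDFReal r x = if 0 ≤ x then r * rexp (-(r * x)) else 0 := by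
  simp [exponentialPDFReal, gammaPDFReal]

lemma expMeasure_eq_withDensity (r : ℝ) :
    expMeasure r = volume.withDensity (exponentialPDF r) := rfl

lemma expMeasure_absolutelyContinuous (r : ℝ) : expMeasure r ≪ volume :=
  withDensity_absolutelyContinuous _ _

lemma ae_nonneg_expMeasure (r : ℝ) : ∀ᵐ x ∂expMeasure r, 0 ≤ x := by
  rw [expMeasure_eq_withDensity, ae_withDensity_iff (measurable_exponentialPDF r)]
  exact ae_of_all _ fun x hx ↦ not_lt.1 fun hneg ↦ hx (exponentialPDF_of_neg hneg)

lemma expMeasure_Ici (hr : 0 < r) {x : ℝ} (hx : 0 ≤ x) :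
    expMeasure r (Ici x) = ENNReal.ofReal (rexp (-(r * x))) := by
  have := isProbabilityMeasure_expMeasure hr
  rw [← measure_congr ((expMeasure_absolutelyContinuous r).ae_eq Ioi_ae_eq_Ici),
    ← compl_Iic, prob_compl_eq_one_sub measurableSet_Iic, ← ofReal_cdf,
    cdf_expMeasure_eq hr, if_pos hx, ← ENNReal.ofReal_one,
    ← ENNReal.ofReal_sub 1 (sub_nonneg.2 (exp_le_one_iff.2 (neg_nonpos.2 (mul_nonneg hr.le hx)))),
    sub_sub_cancel]

lemma mgf_id_expMeasure (hr : 0 < r) {t : ℝ} (ht : t < r) :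
    mgf id (expMeasure r) t = r / (r - t) := by
  have hdens : ∀ x, (exponentialPDF r x).toReal = exponentialPDFReal r x := fun x ↦
    ENNReal.toReal_ofReal (exponentialPDFReal_nonneg hr x)
  rw [mgf, expMeasure_eq_withDensity, integral_withDensity_eq_integral_toReal_smul
    (measurable_exponentialPDF r) (ae_of_all _ fun _ ↦ ENNReal.ofReal_lt_top)]
  simp only [hdens, exponentialPDFReal_eq, id, smul_eq_mul]
  rw [← setIntegral_eq_integral_of_forall_compl_eq_zero (s := Ici 0)
      fun x hx ↦ by rw [if_neg (show ¬ 0 ≤ x from hx), zero_mul],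
    integral_Ici_eq_integral_Ioi,
    setIntegral_congr_fun measurableSet_Ioi (g := fun x ↦ r * rexp ((t - r) * x))
      fun x (hx : 0 < x) ↦ by simp only [if_pos hx.le, mul_assoc, ← exp_add]; ring_nf,
    integral_const_mul, integral_exp_mul_Ioi (sub_neg.2 ht),
    mul_zero, exp_zero, neg_div, ← div_neg, neg_sub, mul_one_div]

section RandomVariables

variable {Ω : Type*} [MeasurableSpace Ω] {μ : Measure Ω} {X Y : Ω → ℝ}

lemma mgf_of_map_eq_expMeasure (hX : AEMeasurable X μ) (hlaw : μ.map X = expMeasure r)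
    (hr : 0 < r) {t : ℝ} (ht : t < r) :
    mgf X μ t = r / (r - t) := by
  rw [← mgf_id_map hX, hlaw, mgf_id_expMeasure hr ht]

lemma ae_nonneg_of_map_eq_expMeasure (hX : AEMeasurable X μ) (hlaw : μ.map X = expMeasure r) :
    ∀ᵐ ω ∂μ, 0 ≤ X ω :=
  ae_of_ae_map hX (hlaw ▸ ae_nonneg_expMeasure r)

variable [IsProbabilityMeasure μ]

lemma measureReal_le_eq_mgf_of_indepFun (hX : Measurable X) (hY : Measurable Y)
    (hYX : IndepFun Y X μ) (hlaw : μ.map X = expMeasure r) (hr : 0 < r)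
    (hY0 : ∀ᵐ ω ∂μ, 0 ≤ Y ω) :
    μ.real {ω | Y ω ≤ X ω} = mgf Y μ (-r) := by
  have := isProbabilityMeasure_expMeasure hr
  have hS : MeasurableSet {p : ℝ × ℝ | p.1 ≤ p.2} := measurableSet_le measurable_fst measurable_snd
  have htail : Measurable fun y ↦ expMeasure r (Ici y) :=
    Antitone.measurable fun _ _ h ↦ measure_mono (Ici_subset_Ici.2 h)
  have hprob : μ {ω | Y ω ≤ X ω} = ∫⁻ ω, ENNReal.ofReal (rexp (-r * Y ω)) ∂μ := calc
    μ {ω | Y ω ≤ X ω} = μ.map (fun ω ↦ (Y ω, X ω)) {p | p.1 ≤ p.2} :=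
      (Measure.map_apply (hY.prodMk hX) hS).symm
    _ = ((μ.map Y).prod (expMeasure r)) {p | p.1 ≤ p.2} := by
      rw [hYX.map_prod_eq_prod_map_map hY.aemeasurable hX.aemeasurable, hlaw]
    _ = ∫⁻ y, expMeasure r (Ici y) ∂μ.map Y := Measure.prod_apply hS
    _ = ∫⁻ ω, expMeasure r (Ici (Y ω)) ∂μ := lintegral_map htail hY
    _ = ∫⁻ ω, ENNReal.ofReal (rexp (-r * Y ω)) ∂μ :=
      lintegral_congr_ae (hY0.mono fun ω h ↦ by simp only [expMeasure_Ici hr h, neg_mul])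
  rw [measureReal_def, hprob, mgf, integral_eq_lintegral_of_nonneg_ae
    (ae_of_all _ fun _ ↦ (exp_pos _).le) (by fun_prop)]

lemma measureReal_mul_lt_eq_one_sub_mgf (hX : Measurable X) (hY : Measurable Y)
    (hYX : IndepFun Y X μ) (hlaw : μ.map X = expMeasure r) (hr : 0 < r)
    (hY0 : ∀ᵐ ω ∂μ, 0 ≤ Y ω) {γ : ℝ} (hγ : 0 < γ) :
    μ.real {ω | γ * X ω < Y ω} = 1 - mgf Y μ (-(r / γ)) := by
  have hevent : {ω | γ * X ω < Y ω} = {ω | γ⁻¹ * Y ω ≤ X ω}ᶜ := by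
    ext ω
    simp [inv_mul_le_iff₀ hγ]
  have hY' : Measurable fun ω ↦ γ⁻¹ * Y ω := hY.const_mul γ⁻¹
  rw [hevent, probReal_compl_eq_one_sub (measurableSet_le hY' hX),
    measureReal_le_eq_mgf_of_indepFun hX hY' (hYX.comp (measurable_const_mul γ⁻¹) measurable_id)
      hlaw hr (hY0.mono fun ω h ↦ by positivity),
    mgf_const_mul, mul_neg, inv_mul_eq_div]

end RandomVariables

end ProbabilityTheory

/-- Two cooperating stations, one interferer, noiseless special case of Theorem 1. -/
theorem two_coop_one_interferer
    {Ω : Type*} [MeasureSpace Ω] [IsProbabilityMeasure (ℙ : Measure Ω)]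
    (H : Fin 3 → Ω → ℝ) (P : Fin 3 → ℝ)
    (hP : ∀ n, 0 < P n) (hne : P 0 ≠ P 1)
    (hmeas : ∀ n, Measurable (H n))
    (hlaw : ∀ n, Measure.map (H n) ℙ = expMeasure (1 / P n))
    (hindep : iIndepFun H ℙ)
    (γ : ℝ) (hγ : 0 < γ) :
    (ℙ {ω | γ * H 2 ω < H 0 ω + H 1 ω}).toReal =
      P 0 / (P 0 - P 1) * (P 0 / (P 0 + γ * P 2)) +
        P 1 / (P 1 - P 0) * (P 1 / (P 1 + γ * P 2)) := by
  have hrate : ∀ n, 0 < 1 / P n := fun n ↦ one_div_pos.2 (hP n)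
  have hsum0 : ∀ᵐ ω, 0 ≤ (H 0 + H 1) ω := by
    filter_upwards [ae_nonneg_of_map_eq_expMeasure (hmeas 0).aemeasurable (hlaw 0),
      ae_nonneg_of_map_eq_expMeasure (hmeas 1).aemeasurable (hlaw 1)] with ω h0 h1
    exact add_nonneg h0 h1
  have hmgf : ∀ n, mgf (H n) ℙ (-(1 / P 2 / γ)) = γ * P 2 / (P n + γ * P 2) := fun n ↦ by
    have := hP n; have := hP 2
    have : P n + γ * P 2 ≠ 0 := by positivity
    rw [mgf_of_map_eq_expMeasure (hmeas n).aemeasurable (hlaw n) (hrate n)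
      (by linarith [hrate n, show 0 < 1 / P 2 / γ by positivity]), sub_neg_eq_add]
    field_simp
    ring
  have key := measureReal_mul_lt_eq_one_sub_mgf (hmeas 2) ((hmeas 0).add (hmeas 1))
    (hindep.indepFun_add_left hmeas 0 1 2 (by decide) (by decide)) (hlaw 2) (hrate 2) hsum0 hγ
  simp only [Pi.add_apply] at key
  rw [← measureReal_def, key, (hindep.indepFun (by decide : (0 : Fin 3) ≠ 1)).mgf_add'
    (hmeas 0).aestronglyMeasurable (hmeas 1).aestronglyMeasurable, hmgf, hmgf]
  have := hP 0; have := hP 1; have := hP 2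
  have h01 : P 0 - P 1 ≠ 0 := sub_ne_zero.2 hne
  have h10 : P 1 - P 0 ≠ 0 := sub_ne_zero.2 hne.symm
  field_simp
  ring
end

section
/- Let $P_1, \ldots, P_N$ be pairwise distinct positive reals and $x \geq 0$. Then the function $F(x) = 1 - \sum_{n=1}^N e^{-x/P_n} \prod_{j \neq n} \frac{P_n}{P_n - P_j}$ satisfies $0 \leq F(x) \leq 1$ for all $x \geq 0$, and $F$ is monotone nondecreasing. -/
open Finset Real Set Function

/-!
Write `S_s(x) = ∑_{n ∈ s} e^{-x/Pₙ} ∏_{j ∈ s, j ≠ n} Pₙ/(Pₙ - Pⱼ)` for the survival function of the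
sum of the exponentials indexed by `s`, so that `F = 1 - S_univ`. Adding one index `m` gives the
linear ODE `S'_{s ∪ {m}} = (S_s - S_{s ∪ {m}}) / Pₘ` with `S_{s ∪ {m}}(0) = 1`, the initial value
being the Lagrange identity `∑ₙ ∏_{j ≠ n} Pₙ/(Pₙ - Pⱼ) = 1`. A solution of `y' = g - r y` with
`g ≥ 0` and `y(0) ≥ 0` stays nonnegative on `[0, ∞)`, because `e^{rx} y` is nondecreasing.
Applied to `S_{s ∪ {m}}`, `1 - S_{s ∪ {m}}` and `S_{s ∪ {m}} - S_s`, this propagates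
`0 ≤ S_s ≤ 1` and `S_s' ≤ 0` by induction on `s`.
-/

lemma nonneg_of_hasDerivAt_sub_mul_self {r : ℝ} {y g : ℝ → ℝ}
    (hy : ∀ x, 0 ≤ x → HasDerivAt y (g x - r * y x) x) (hg : ∀ x, 0 < x → 0 ≤ g x)
    (h0 : 0 ≤ y 0) {x : ℝ} (hx : 0 ≤ x) : 0 ≤ y x := by
  have hmono : MonotoneOn (fun t => exp (r * t) * y t) (Ici 0) := by
    refine monotoneOn_of_hasDerivWithinAt_nonneg (f' := fun t => exp (r * t) * g t)
      (convex_Ici 0) (fun t ht => ?_) (fun t ht => ?_) (fun t ht => ?_)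
    · exact ((continuous_const_mul r).rexp.continuousAt.mul
        (hy t ht).continuousAt).continuousWithinAt
    · rw [interior_Ici] at ht
      have h := ((hasDerivAt_id' t).const_mul r).exp.mul (hy t ht.le)
      exact (h.congr_deriv (by ring)).hasDerivWithinAt
    · exact mul_nonneg (exp_pos _).le (hg t (by rwa [interior_Ici] at ht))
  have h := hmono self_mem_Ici hx hx
  simp only [mul_zero, exp_zero, one_mul] at h
  exact nonneg_of_mul_nonneg_right (h0.trans h) (exp_pos _)

section Hypoexponential

variable {ι : Type*} [DecidableEq ι] (P : ι → ℝ)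

noncomputable def hypoexpWeight (s : Finset ι) (n : ι) : ℝ :=
  ∏ j ∈ s.erase n, P n / (P n - P j)

noncomputable def hypoexpSurvival (s : Finset ι) (x : ℝ) : ℝ :=
  ∑ n ∈ s, exp (-x / P n) * hypoexpWeight P s n

variable {P}

theorem sum_hypoexpWeight (hP : ∀ n, P n ≠ 0) (hinj : Injective P) {s : Finset ι}
    (hs : s.Nonempty) : ∑ n ∈ s, hypoexpWeight P s n = 1 := by
  -- The weights are the values at `0` of the Lagrange basis on the nodes `1 / Pₙ`.
  have hv : InjOn (fun n => (P n)⁻¹) s := fun a _ b _ hab => hinj (inv_injective hab)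
  have h := congrArg (Polynomial.eval 0) (Lagrange.sum_basis hv hs)
  rw [Polynomial.eval_finsetSum, Polynomial.eval_one] at h
  rw [← h]
  refine sum_congr rfl fun n _ => ?_
  rw [Lagrange.basis, Polynomial.eval_prod]
  refine prod_congr rfl fun j hj => ?_
  have hPn := hP n
  have hPj := hP j
  have hnj : P n - P j ≠ 0 := sub_ne_zero.2 (hinj.ne (ne_of_mem_erase hj).symm)
  have hjn : P j - P n ≠ 0 := sub_ne_zero.2 (hinj.ne (ne_of_mem_erase hj))
  simp only [Lagrange.basisDivisor, Polynomial.eval_mul, Polynomial.eval_C, Polynomial.eval_sub,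
    Polynomial.eval_X, zero_sub, inv_sub_inv hPn hPj, inv_div]
  field_simp
  ring

theorem hypoexpSurvival_zero (s : Finset ι) :
    hypoexpSurvival P s 0 = ∑ n ∈ s, hypoexpWeight P s n := by
  simp [hypoexpSurvival]

theorem hasDerivAt_hypoexpSurvival (s : Finset ι) (x : ℝ) :
    HasDerivAt (hypoexpSurvival P s)
      (∑ n ∈ s, -(P n)⁻¹ * exp (-x / P n) * hypoexpWeight P s n) x := by
  have h := HasDerivAt.fun_sum (u := s) fun n _ =>
    (((hasDerivAt_neg x).div_const (P n)).exp.mul_const (hypoexpWeight P s n))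
  exact h.congr_deriv (sum_congr rfl fun n _ => by ring)

theorem hypoexpWeight_insert {s : Finset ι} {m n : ι} (hm : m ∉ s) (hn : n ∈ s) :
    hypoexpWeight P (insert m s) n = P n / (P n - P m) * hypoexpWeight P s n := by
  rw [hypoexpWeight, hypoexpWeight, erase_insert_of_ne (ne_of_mem_of_not_mem hn hm).symm,
    prod_insert fun h => hm (mem_of_mem_erase h)]

theorem hasDerivAt_hypoexpSurvival_insert (hP : ∀ n, P n ≠ 0) (hinj : Injective P)
    {s : Finset ι} {m : ι} (hm : m ∉ s) (x : ℝ) :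
    HasDerivAt (hypoexpSurvival P (insert m s))
      ((P m)⁻¹ * hypoexpSurvival P s x - (P m)⁻¹ * hypoexpSurvival P (insert m s) x) x := by
  refine (hasDerivAt_hypoexpSurvival (insert m s) x).congr_deriv ?_
  have hterm : ∀ n ∈ s, -(P n)⁻¹ * exp (-x / P n) * hypoexpWeight P (insert m s) n =
      (P m)⁻¹ * (exp (-x / P n) * hypoexpWeight P s n) -
        (P m)⁻¹ * (exp (-x / P n) * hypoexpWeight P (insert m s) n) := by
    intro n hn
    have hPn := hP n
    have hPm := hP m
    have hnm : P n - P m ≠ 0 := sub_ne_zero.2 (hinj.ne (ne_of_mem_of_not_mem hn hm))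
    rw [hypoexpWeight_insert hm hn]
    field_simp
    ring
  rw [hypoexpSurvival, hypoexpSurvival, sum_insert hm, sum_insert hm, sum_congr rfl hterm,
    sum_sub_distrib, ← mul_sum, ← mul_sum]
  ring

theorem hypoexpSurvival_mem_Icc_and_deriv_nonpos (hP : ∀ n, 0 < P n) (hinj : Injective P)
    (s : Finset ι) {x : ℝ} (hx : 0 ≤ x) :
    hypoexpSurvival P s x ∈ Set.Icc 0 1 ∧ deriv (hypoexpSurvival P s) x ≤ 0 := by
  induction s using Finset.induction_on generalizing x with
  | empty =>
    simp [show hypoexpSurvival P (∅ : Finset ι) = 0 from funext fun _ => sum_empty]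
  | insert m s hm ih =>
    have hr : 0 ≤ (P m)⁻¹ := inv_nonneg.2 (hP m).le
    have hG := hasDerivAt_hypoexpSurvival_insert (fun n => (hP n).ne') hinj hm
    have hS (t : ℝ) := (hasDerivAt_hypoexpSurvival (P := P) s t).differentiableAt.hasDerivAt
    have hG0 : hypoexpSurvival P (insert m s) 0 = 1 := by
      rw [hypoexpSurvival_zero, sum_hypoexpWeight (fun n => (hP n).ne') hinj (insert_nonempty m s)]
    have hG_nonneg : 0 ≤ hypoexpSurvival P (insert m s) x :=
      nonneg_of_hasDerivAt_sub_mul_self (fun t _ => hG t)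
        (fun t ht => mul_nonneg hr (ih ht.le).1.1) (hG0 ▸ zero_le_one) hx
    have hG_le_one : 0 ≤ 1 - hypoexpSurvival P (insert m s) x :=
      nonneg_of_hasDerivAt_sub_mul_self (r := (P m)⁻¹)
        (y := fun t => 1 - hypoexpSurvival P (insert m s) t)
        (fun t _ => ((hG t).const_sub 1).congr_deriv (by ring))
        (fun t ht => mul_nonneg hr (sub_nonneg.2 (ih ht.le).1.2)) (by rw [hG0, sub_self]) hx
    have hS_le_G : 0 ≤ hypoexpSurvival P (insert m s) x - hypoexpSurvival P s x :=
      nonneg_of_hasDerivAt_sub_mul_self (r := (P m)⁻¹)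
        (y := fun t => hypoexpSurvival P (insert m s) t - hypoexpSurvival P s t)
        (fun t _ => ((hG t).sub (hS t)).congr_deriv (by ring))
        (fun t ht => neg_nonneg.2 (ih ht.le).2) (by rw [hG0, sub_nonneg]; exact (ih le_rfl).1.2) hx
    refine ⟨⟨hG_nonneg, sub_nonneg.1 hG_le_one⟩, ?_⟩
    rw [(hG x).deriv]
    nlinarith [mul_nonneg hr hS_le_G]

theorem antitoneOn_hypoexpSurvival (hP : ∀ n, 0 < P n) (hinj : Injective P) (s : Finset ι) :
    AntitoneOn (hypoexpSurvival P s) (Ici 0) :=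
  antitoneOn_of_deriv_nonpos (convex_Ici 0)
    (fun x _ => (hasDerivAt_hypoexpSurvival s x).continuousAt.continuousWithinAt)
    (fun x _ => (hasDerivAt_hypoexpSurvival s x).differentiableAt.differentiableWithinAt)
    (fun _ hx => (hypoexpSurvival_mem_Icc_and_deriv_nonpos hP hinj s (interior_subset hx)).2)

end Hypoexponential

/-- The hypoexponential CDF `F(x) = 1 - ∑ n, e^{-x/Pₙ} ∏_{j ≠ n} Pₙ/(Pₙ - Pⱼ)` lies in
`[0,1]` on `[0, ∞)` and is monotone nondecreasing there. -/
theorem hypoexponential_cdf_bounds_mono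
    {N : ℕ} (P : Fin N → ℝ) (hP : ∀ n, 0 < P n) (hdist : Function.Injective P) :
    (∀ x : ℝ, 0 ≤ x →
        0 ≤ 1 - ∑ n, Real.exp (-x / P n) * ∏ j ∈ Finset.univ.erase n, P n / (P n - P j) ∧
        1 - ∑ n, Real.exp (-x / P n) * ∏ j ∈ Finset.univ.erase n, P n / (P n - P j) ≤ 1) ∧
    (∀ x y : ℝ, 0 ≤ x → x ≤ y →
        1 - ∑ n, Real.exp (-x / P n) * ∏ j ∈ Finset.univ.erase n, P n / (P n - P j) ≤
        1 - ∑ n, Real.exp (-y / P n) * ∏ j ∈ Finset.univ.erase n, P n / (P n - P j)) := by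
  refine ⟨fun x hx => ?_, fun x y hx hxy => ?_⟩
  · obtain ⟨⟨h0, h1⟩, -⟩ := hypoexpSurvival_mem_Icc_and_deriv_nonpos hP hdist univ hx
    exact ⟨sub_nonneg.2 h1, sub_le_self 1 h0⟩
  · exact sub_le_sub_left (antitoneOn_hypoexpSurvival hP hdist univ hx (hx.trans hxy) hxy) 1
end
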